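/- Fix a simple graph G on a vertex type V and a symmetric edge-weight function w : V → V → ℝ≥0. Let I be a finite index set and for each i ∈ I let S_i ⊆ V be a source set and R_i ⊆ V a set with S_i ⊆ R_i. Fix a vertex v and let U = { i ∈ I | v ∉ R_i }. Then Σ_{i ∈ I} d_w(S_i, v) ≥ Σ_{i ∈ I \ U} d_w(S_i, v) + Σ_{i ∈ U} θ_{R_i}, where θ_{R_i} = ⨅_{v' ∉ R_i} D_{R_i}(v') is the frontier bound of R_i. (This is the lower bound on the cost of a partially-seen match: keywords that have already seen a vertex contribute their exact distance, and each unseen keyword contributes at least the value of the current head of its priority queue.) -/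

import Mathlib

open scoped ENNReal

/-- The weight of a walk: the sum of the edge weights along its darts. -/
noncomputable def walkWeight {V : Type*} (G : SimpleGraph V) (w : V → V → NNReal)
    {u v : V} (p : G.Walk u v) : ℝ≥0∞ :=
  (p.darts.map fun d => (w d.toProd.1 d.toProd.2 : ℝ≥0∞)).sum

/-- The weighted distance from a source set `S` to a vertex `v`: the infimum of
the weights of all walks from some vertex of `S` to `v` (`∞` if there is none). -/
noncomputable def wdist {V : Type*} (G : SimpleGraph V) (w : V → V → NNReal)
    (S : Set V) (v : V) : ℝ≥0∞ :=
  ⨅ (s : V) (_ : s ∈ S) (p : G.Walk s v), walkWeight G w p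

/-- The frontier value `D_R(v)` of a vertex `v ∉ R`. -/
noncomputable def frontierVal {V : Type*} (G : SimpleGraph V) (w : V → V → NNReal)
    (S R : Set V) (v : V) : ℝ≥0∞ :=
  ⨅ (u : V) (_ : u ∈ R) (_ : G.Adj u v), (wdist G w S u + (w u v : ℝ≥0∞))

/-- The frontier bound `θ_R = ⨅_{v ∉ R} D_R(v)`. -/
noncomputable def frontierBound {V : Type*} (G : SimpleGraph V) (w : V → V → NNReal)
    (S R : Set V) : ℝ≥0∞ :=
  ⨅ (v : V) (_ : v ∉ R), frontierVal G w S R v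

/-! Every walk from `S` to a vertex `v ∉ R` starts inside `R`, since `S ⊆ R`, so it has a first
edge `(u, x)` leaving `R`. The prefix up to `u` is a walk from `S`, so the weight of the walk is at
least `d(S, u) + w(u, x) ≥ D_R(x) ≥ θ_R`. Hence `θ_R ≤ d(S, v)` for every unseen index, and the
bound follows by splitting the sum over the seen and unseen indices. -/

section

variable {V : Type*} (G : SimpleGraph V) (w : V → V → NNReal)

@[simp]
lemma walkWeight_nil {u : V} : walkWeight G w (SimpleGraph.Walk.nil : G.Walk u u) = 0 := by
  simp [walkWeight]

@[simp]
lemma walkWeight_cons {u x v : V} (h : G.Adj u x) (p : G.Walk x v) :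
    walkWeight G w (p.cons h) = w u x + walkWeight G w p := by
  simp [walkWeight]

lemma walkWeight_concat {s u x : V} (p : G.Walk s u) (h : G.Adj u x) :
    walkWeight G w (p.concat h) = walkWeight G w p + w u x := by
  simp [walkWeight, SimpleGraph.Walk.concat, SimpleGraph.Walk.darts_append]

variable {G w}

lemma wdist_le_walkWeight {S : Set V} {s v : V} (hs : s ∈ S) (p : G.Walk s v) :
    wdist G w S v ≤ walkWeight G w p :=
  iInf_le_of_le s (iInf_le_of_le hs (iInf_le _ p))

lemma wdist_eq_zero_of_mem {S : Set V} {s : V} (hs : s ∈ S) : wdist G w S s = 0 :=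
  nonpos_iff_eq_zero.1 <| (wdist_le_walkWeight hs .nil).trans_eq (walkWeight_nil G w)

lemma wdist_le_wdist_add_of_adj (S : Set V) {u x : V} (h : G.Adj u x) :
    wdist G w S x ≤ wdist G w S u + w u x := by
  simp only [wdist, ENNReal.iInf_add]
  refine le_iInf fun s => le_iInf fun hs => le_iInf fun p => ?_
  exact (wdist_le_walkWeight hs (p.concat h)).trans_eq (walkWeight_concat G w p h)

lemma frontierBound_le_wdist_add_of_adj (S : Set V) {R : Set V} {u x : V} (hu : u ∈ R)
    (hx : x ∉ R) (h : G.Adj u x) :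
    frontierBound G w S R ≤ wdist G w S u + w u x :=
  calc frontierBound G w S R ≤ frontierVal G w S R x := iInf_le_of_le x (iInf_le _ hx)
    _ ≤ wdist G w S u + w u x := iInf_le_of_le u (iInf_le_of_le hu (iInf_le _ h))

lemma frontierBound_le_wdist_add_walkWeight (S : Set V) {R : Set V} {u v : V} (p : G.Walk u v)
    (hu : u ∈ R) (hv : v ∉ R) :
    frontierBound G w S R ≤ wdist G w S u + walkWeight G w p := by
  induction p with
  | nil => exact absurd hu hv
  | @cons u x v h q ih =>
    by_cases hx : x ∈ R
    · calc frontierBound G w S R ≤ wdist G w S x + walkWeight G w q := ih hx hv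
        _ ≤ wdist G w S u + w u x + walkWeight G w q := by
            gcongr; exact wdist_le_wdist_add_of_adj S h
        _ = wdist G w S u + walkWeight G w (q.cons h) := by
            rw [walkWeight_cons, add_assoc]
    · calc frontierBound G w S R ≤ wdist G w S u + w u x :=
            frontierBound_le_wdist_add_of_adj S hu hx h
        _ ≤ wdist G w S u + walkWeight G w (q.cons h) := by
            rw [walkWeight_cons]; gcongr; exact le_self_add

lemma frontierBound_le_wdist {S R : Set V} (hSR : S ⊆ R) {v : V} (hv : v ∉ R) :
    frontierBound G w S R ≤ wdist G w S v := by
  refine le_iInf fun s => le_iInf fun hs => le_iInf fun p => ?_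
  simpa [wdist_eq_zero_of_mem hs] using frontierBound_le_wdist_add_walkWeight S p (hSR hs) hv

end

theorem partially_seen_lower_bound_general {V I : Type*} [Fintype I] [DecidableEq I]
    (G : SimpleGraph V) (w : V → V → NNReal)
    (S R : I → Set V) (hSR : ∀ i, S i ⊆ R i) (v : V)
    (U : Finset I) (hU : ∀ i, i ∈ U ↔ v ∉ R i) :
    ∑ i ∈ Finset.univ \ U, wdist G w (S i) v + ∑ i ∈ U, frontierBound G w (S i) (R i)
      ≤ ∑ i : I, wdist G w (S i) v := by
  rw [← Finset.sum_sdiff (Finset.subset_univ U)]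
  gcongr with i hi
  exact frontierBound_le_wdist (hSR i) ((hU i).1 hi)

/-- lower bound on the cost of a partially-seen match: for a finite
family of source sets `S i ⊆ R i` and a vertex `v`, with `U` the set of indices
whose keyword has not yet seen `v` (i.e. `v ∉ R i`), the total distance
`Σ_i d_w(S i, v)` is at least the exact distances over the seen indices plus the
frontier bounds `θ_{R i}` over the unseen indices. -/
theorem partially_seen_lower_bound {V I : Type*} [Fintype I] [DecidableEq I]
    (G : SimpleGraph V) (w : V → V → NNReal) (hw : ∀ u v, w u v = w v u)
    (S R : I → Set V) (hSR : ∀ i, S i ⊆ R i) (v : V)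
    (U : Finset I) (hU : ∀ i, i ∈ U ↔ v ∉ R i) :
    ∑ i ∈ Finset.univ \ U, wdist G w (S i) v + ∑ i ∈ U, frontierBound G w (S i) (R i)
      ≤ ∑ i : I, wdist G w (S i) v :=
  partially_seen_lower_bound_general G w S R hSR v U hU
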